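/- Let H be a hybrid quantum–classical Hamiltonian on Fin n × Fin m, H = (Matrix.diagonal ε ⊗ₖ 1) + (1 ⊗ₖ H_Q) + ∑ i, (γ i : ℂ) • (Matrix.stdBasisMatrix i i 1 ⊗ₖ S i). For every o : Fin n → ℝ, every t : ℝ, and every complex matrix ρ indexed by Fin n × Fin m, the expectation value of the classical observable is invariant under the hybrid time evolution: Matrix.trace ((Matrix.diagonal o ⊗ₖ 1) * (Matrix.exp ℂ (-(t • Complex.I) • H) * ρ * Matrix.exp ℂ ((t • Complex.I) • H))) = Matrix.trace ((Matrix.diagonal o ⊗ₖ 1) * ρ). (Dynamical form of Theorem 1: the classical sector's observables are conserved quantities of every hybrid Hamiltonian evolution.) -/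

import Mathlib

/-!
Every term of the hybrid Hamiltonian has the form `D ⊗ₖ B` with `D` diagonal, so it commutes with
a classical observable `diagonal o ⊗ₖ 1`. Hence the observable commutes with the propagator
`exp (-(t • I) • H)` as well, and cyclicity of the trace removes the propagator from the
expectation value.
-/

open Matrix Kronecker

theorem Commute.kronecker {R l m : Type*} [CommSemiring R] [Fintype l] [Fintype m]
    {A A' : Matrix l l R} {B B' : Matrix m m R} (hA : Commute A A') (hB : Commute B B') :
    Commute (A ⊗ₖ B) (A' ⊗ₖ B') := by
  simp only [Commute, SemiconjBy, ← mul_kronecker_mul, hA.eq, hB.eq]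

section Hybrid

variable {R n m : Type*} [CommSemiring R] [Fintype n] [DecidableEq n] [Fintype m] [DecidableEq m]

theorem commute_diagonal_kronecker_one_diagonal_kronecker (o d : n → R) (B : Matrix m m R) :
    Commute (diagonal o ⊗ₖ (1 : Matrix m m R)) (diagonal d ⊗ₖ B) :=
  (commute_diagonal o d).kronecker (Commute.one_left B)

theorem commute_diagonal_kronecker_one_hybridHamiltonian (o ε γ : n → R) (H_Q : Matrix m m R)
    (S : n → Matrix m m R) :
    Commute (diagonal o ⊗ₖ (1 : Matrix m m R))
      ((diagonal ε ⊗ₖ 1) + ((1 : Matrix n n R) ⊗ₖ H_Q) + ∑ i, γ i • (single i i 1 ⊗ₖ S i)) := by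
  refine ((commute_diagonal_kronecker_one_diagonal_kronecker o ε 1).add_right ?_).add_right
    (Commute.sum_right _ _ _ fun i _ => Commute.smul_right ?_ _)
  · simpa only [diagonal_one] using commute_diagonal_kronecker_one_diagonal_kronecker o (fun _ => 1) H_Q
  · simpa only [diagonal_single] using
      commute_diagonal_kronecker_one_diagonal_kronecker o (Pi.single i 1) (S i)

end Hybrid

theorem Matrix.trace_mul_conj_eq_of_commute {R m : Type*} [CommSemiring R] [Fintype m] [DecidableEq m]
    {O U V : Matrix m m R} (ρ : Matrix m m R) (hVU : V * U = 1) (hOV : Commute O V) :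
    trace (O * (U * ρ * V)) = trace (O * ρ) :=
  calc trace (O * (U * ρ * V))
      = trace (V * O * U * ρ) := by
        rw [← Matrix.mul_assoc, trace_mul_comm, Matrix.mul_assoc V, Matrix.mul_assoc V,
          ← Matrix.mul_assoc O]
    _ = trace (O * ρ) := by rw [← hOV.eq, Matrix.mul_assoc O, hVU, Matrix.mul_one]

theorem Matrix.trace_mul_exp_conj_eq_of_commute {𝔸 m : Type*} [NormedCommRing 𝔸]
    [NormedAlgebra ℚ 𝔸] [CompleteSpace 𝔸] [Fintype m] [DecidableEq m] {O A : Matrix m m 𝔸}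
    (ρ : Matrix m m 𝔸) (hOA : Commute O A) :
    trace (O * (NormedSpace.exp (-A) * ρ * NormedSpace.exp A)) = trace (O * ρ) := by
  refine trace_mul_conj_eq_of_commute ρ ?_ hOA.exp_right
  rw [← exp_add_of_commute _ _ (Commute.refl A).neg_right, add_neg_cancel, NormedSpace.exp_zero]

/-- Dynamical form of Theorem 1: the expectation value of any classical
observable is invariant under the hybrid Hamiltonian time evolution. -/
theorem classical_expectation_conserved_under_hybrid_evolution
    (n m : ℕ)
    (ε γ : Fin n → ℝ)
    (H_Q : Matrix (Fin m) (Fin m) ℂ)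
    (S : Fin n → Matrix (Fin m) (Fin m) ℂ)
    (H : Matrix (Fin n × Fin m) (Fin n × Fin m) ℂ)
    (hH : H = (Matrix.diagonal (fun i => (ε i : ℂ)) ⊗ₖ 1)
        + ((1 : Matrix (Fin n) (Fin n) ℂ) ⊗ₖ H_Q)
        + ∑ i : Fin n, (γ i : ℂ) • (Matrix.single i i 1 ⊗ₖ S i))
    (o : Fin n → ℝ) (t : ℝ)
    (ρ : Matrix (Fin n × Fin m) (Fin n × Fin m) ℂ) :
    Matrix.trace ((Matrix.diagonal (fun i => (o i : ℂ)) ⊗ₖ (1 : Matrix (Fin m) (Fin m) ℂ))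
        * (NormedSpace.exp (-(t • Complex.I) • H) * ρ * NormedSpace.exp ((t • Complex.I) • H)))
      = Matrix.trace ((Matrix.diagonal (fun i => (o i : ℂ)) ⊗ₖ (1 : Matrix (Fin m) (Fin m) ℂ)) * ρ) := by
  have hOH := hH ▸ commute_diagonal_kronecker_one_hybridHamiltonian (fun i => (o i : ℂ))
    (fun i => (ε i : ℂ)) (fun i => (γ i : ℂ)) H_Q S
  rw [neg_smul]
  exact trace_mul_exp_conj_eq_of_commute ρ (hOH.smul_right _)
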